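/- Let D be a minimum weight cover of G and let H be the subgraph of G consisting of edges uv with w(u,v) = D(u) + D(v) (the tight edges). If K is a matching of H that matches every node u with D(u) > 0, then K is a maximum weight matching of G. -/

import Mathlib

open Finset

variable {V : Type*} [Fintype V] [DecidableEq V]

/-- `C` is a (weighted vertex) cover of the bipartite graph on parts `X`, `Y`
with edge weights `w` (where `w x y = 0` means no edge). -/
def IsCover (X Y : Finset V) (w : V → V → ℕ) (C : V → ℕ) : Prop :=
  ∀ x ∈ X, ∀ y ∈ Y, w x y ≤ C x + C y

/-- The weight of a cover: the sum of its values over all nodes. -/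
def coverWt (X Y : Finset V) (C : V → ℕ) : ℕ := ∑ u ∈ X ∪ Y, C u

/-- `M` is a matching of the weighted bipartite graph: a set of pairwise
node-disjoint edges, each going from `X` to `Y` with positive weight. -/
def IsBMatching (X Y : Finset V) (w : V → V → ℕ) (M : Finset (V × V)) : Prop :=
  (∀ e ∈ M, e.1 ∈ X ∧ e.2 ∈ Y ∧ 0 < w e.1 e.2) ∧
  (∀ e ∈ M, ∀ f ∈ M, e ≠ f → e.1 ≠ f.1 ∧ e.2 ≠ f.2)

/-- The total weight of a matching. -/
def mWt (w : V → V → ℕ) (M : Finset (V × V)) : ℕ := ∑ e ∈ M, w e.1 e.2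

/-!
Weak duality: each edge of a matching `M` weighs at most the sum of `D` at its two endpoints,
and these endpoints are distinct nodes of `X ∪ Y`, so `mWt w M ≤ coverWt X Y D`. For `K` both
inequalities are equalities, since its edges are tight and every node with `D u > 0` is an
endpoint; hence `mWt w K = coverWt X Y D` bounds every matching.
-/

section

variable {α : Type*} [DecidableEq α]

def endpoints (M : Finset (α × α)) : Finset α :=
  M.image Prod.fst ∪ M.image Prod.snd

lemma mem_endpoints {M : Finset (α × α)} {u : α} :
    u ∈ endpoints M ↔ ∃ e ∈ M, e.1 = u ∨ e.2 = u := by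
  simp only [endpoints, mem_union, mem_image]
  constructor
  · rintro (⟨e, he, rfl⟩ | ⟨e, he, rfl⟩)
    exacts [⟨e, he, .inl rfl⟩, ⟨e, he, .inr rfl⟩]
  · rintro ⟨e, he, rfl | rfl⟩
    exacts [.inl ⟨e, he, rfl⟩, .inr ⟨e, he, rfl⟩]

namespace IsBMatching

variable {X Y : Finset α} {w : α → α → ℕ} {M : Finset (α × α)}

lemma endpoints_subset (hM : IsBMatching X Y w M) : endpoints M ⊆ X ∪ Y := by
  intro u hu
  obtain ⟨e, he, rfl | rfl⟩ := mem_endpoints.mp hu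
  · exact mem_union_left _ (hM.1 e he).1
  · exact mem_union_right _ (hM.1 e he).2.1

lemma sum_endpoints {β : Type*} [AddCommMonoid β] (hXY : Disjoint X Y)
    (hM : IsBMatching X Y w M) (f : α → β) :
    ∑ u ∈ endpoints M, f u = ∑ e ∈ M, (f e.1 + f e.2) := by
  have hfst : Set.InjOn Prod.fst (M : Set (α × α)) := fun a ha b hb h =>
    not_not.mp fun hne => (hM.2 a ha b hb hne).1 h
  have hsnd : Set.InjOn Prod.snd (M : Set (α × α)) := fun a ha b hb h =>
    not_not.mp fun hne => (hM.2 a ha b hb hne).2 h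
  have hdisj : Disjoint (M.image Prod.fst) (M.image Prod.snd) := by
    rw [disjoint_left]
    rintro _ hu hv
    obtain ⟨e, he, rfl⟩ := mem_image.mp hu
    obtain ⟨f, hf, hfe⟩ := mem_image.mp hv
    exact disjoint_left.mp hXY (hM.1 e he).1 (hfe ▸ (hM.1 f hf).2.1 : e.1 ∈ Y)
  rw [endpoints, sum_union hdisj, sum_image hfst, sum_image hsnd, ← sum_add_distrib]

lemma mWt_le_coverWt (hXY : Disjoint X Y) (hM : IsBMatching X Y w M) {D : α → ℕ}
    (hD : IsCover X Y w D) : mWt w M ≤ coverWt X Y D :=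
  calc mWt w M ≤ ∑ e ∈ M, (D e.1 + D e.2) :=
        sum_le_sum fun e he => hD e.1 (hM.1 e he).1 e.2 (hM.1 e he).2.1
    _ = ∑ u ∈ endpoints M, D u := (hM.sum_endpoints hXY D).symm
    _ ≤ coverWt X Y D := sum_le_sum_of_subset hM.endpoints_subset

lemma mWt_eq_coverWt_of_tight (hXY : Disjoint X Y) (hM : IsBMatching X Y w M) {D : α → ℕ}
    (htight : ∀ e ∈ M, w e.1 e.2 = D e.1 + D e.2)
    (hmatched : ∀ u ∈ X ∪ Y, 0 < D u → u ∈ endpoints M) :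
    mWt w M = coverWt X Y D :=
  calc mWt w M = ∑ e ∈ M, (D e.1 + D e.2) := sum_congr rfl htight
    _ = ∑ u ∈ endpoints M, D u := (hM.sum_endpoints hXY D).symm
    _ = coverWt X Y D := sum_subset hM.endpoints_subset fun u hu hunmatched =>
        Nat.eq_zero_of_not_pos fun hpos => hunmatched (hmatched u hu hpos)

end IsBMatching

end

theorem tight_matching_is_max_general
    (X Y : Finset V) (hXY : Disjoint X Y) (w : V → V → ℕ)
    (D : V → ℕ) (hD : IsCover X Y w D)
    (K : Finset (V × V)) (hK : IsBMatching X Y w K)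
    (htight : ∀ e ∈ K, w e.1 e.2 = D e.1 + D e.2)
    (hmatched : ∀ u ∈ X ∪ Y, 0 < D u → ∃ e ∈ K, e.1 = u ∨ e.2 = u) :
    ∀ M : Finset (V × V), IsBMatching X Y w M → mWt w M ≤ mWt w K := by
  intro M hM
  have hKmatched : ∀ u ∈ X ∪ Y, 0 < D u → u ∈ endpoints K := fun u hu hpos =>
    mem_endpoints.mpr (hmatched u hu hpos)
  calc mWt w M ≤ coverWt X Y D := hM.mWt_le_coverWt hXY hD
    _ = mWt w K := (hK.mWt_eq_coverWt_of_tight hXY htight hKmatched).symm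

/-- Any matching of the tight-edge subgraph `H` (edges with `w(u,v) = D(u) + D(v)`)
that matches every node `u` with `D(u) > 0` is a maximum weight matching of `G`. -/
theorem tight_matching_is_max
    (X Y : Finset V) (hXY : Disjoint X Y) (w : V → V → ℕ)
    (D : V → ℕ) (hD : IsCover X Y w D)
    (hDmin : ∀ C' : V → ℕ, IsCover X Y w C' → coverWt X Y D ≤ coverWt X Y C')
    (K : Finset (V × V)) (hK : IsBMatching X Y w K)
    (htight : ∀ e ∈ K, w e.1 e.2 = D e.1 + D e.2)
    (hmatched : ∀ u ∈ X ∪ Y, 0 < D u → ∃ e ∈ K, e.1 = u ∨ e.2 = u) :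
    ∀ M : Finset (V × V), IsBMatching X Y w M → mWt w M ≤ mWt w K :=
  tight_matching_is_max_general X Y hXY w D hD K hK htight hmatched
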